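/- Let X and Y be proper CAT(0) spaces, f : X → Y a continuous affine map, and α, β asymptotic unit-speed geodesic rays in X. If the rescaling constant ρ(α) = 0 (i.e., f(α) is a single point), then ρ(β) = 0. -/

import Mathlib

/-! Let `γ` be the geodesic from `β 0` to the point of `α` at distance `2 ^ k * t` from `β 0`.
Its endpoint lies within `2 * C` of `β (2 ^ k * t)`, so halving `k` times with the CAT(0)
midpoint inequality puts `γ t` within `2 * C / 2 ^ k` of `β t`. As `f` is affine and constant on
`α`, `f ∘ γ` has speed `dist (f (β 0)) (f (α 0)) / (2 ^ k * t)`, so `f (γ t)` lies within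
`dist (f (β 0)) (f (α 0)) / 2 ^ k` of `f (β 0)`. Letting `k → ∞`, continuity of `f` gives
`f (β t) = f (β 0)`. -/

def IsUnitSpeedOn {X : Type*} [MetricSpace X] (γ : ℝ → X) (s : Set ℝ) : Prop :=
  ∀ a ∈ s, ∀ b ∈ s, dist (γ a) (γ b) = |a - b|

def GeodesicMetricSpace (X : Type*) [MetricSpace X] : Prop :=
  ∀ x y : X, ∃ γ : ℝ → X, γ 0 = x ∧ γ (dist x y) = y ∧
    IsUnitSpeedOn γ (Set.Icc 0 (dist x y))

def CAT0Space (X : Type*) [MetricSpace X] : Prop :=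
  GeodesicMetricSpace X ∧ ∀ x y m z : X,
    dist x m = dist x y / 2 → dist y m = dist x y / 2 →
    dist z m ^ 2 ≤ dist z x ^ 2 / 2 + dist z y ^ 2 / 2 - dist x y ^ 2 / 4

/-- An affine map: every unit-speed geodesic segment is mapped to a geodesic segment
traversed at some constant speed `ρ ≥ 0` (depending on the segment). -/
def IsAffineMap {X Y : Type*} [MetricSpace X] [MetricSpace Y] (f : X → Y) : Prop :=
  ∀ (γ : ℝ → X) (L : ℝ), 0 ≤ L → IsUnitSpeedOn γ (Set.Icc 0 L) →
    ∃ ρ : ℝ, 0 ≤ ρ ∧ ∀ a ∈ Set.Icc (0:ℝ) L, ∀ b ∈ Set.Icc (0:ℝ) L,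
      dist (f (γ a)) (f (γ b)) = ρ * |a - b|

open Set Filter Topology

namespace IsUnitSpeedOn

variable {X : Type*} [MetricSpace X] {γ : ℝ → X} {s t : Set ℝ}

lemma mono (h : IsUnitSpeedOn γ s) (hts : t ⊆ s) : IsUnitSpeedOn γ t :=
  fun a ha b hb => h a (hts ha) b (hts hb)

lemma dist_zero_apply (h : IsUnitSpeedOn γ s) (h0 : 0 ∈ s) {a : ℝ} (ha : a ∈ s) (ha0 : 0 ≤ a) :
    dist (γ 0) (γ a) = a := by
  rw [h 0 h0 a ha, zero_sub, abs_neg, abs_of_nonneg ha0]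

lemma dist_apply_half {L : ℝ} (h : IsUnitSpeedOn γ (Icc 0 L)) (hL : 0 ≤ L) :
    dist (γ 0) (γ (L / 2)) = dist (γ 0) (γ L) / 2 ∧
      dist (γ L) (γ (L / 2)) = dist (γ 0) (γ L) / 2 := by
  have hmid : L / 2 ∈ Icc 0 L := ⟨by linarith, by linarith⟩
  rw [h 0 (left_mem_Icc.2 hL) _ hmid, h 0 (left_mem_Icc.2 hL) L (right_mem_Icc.2 hL),
    h L (right_mem_Icc.2 hL) _ hmid, abs_of_nonpos (by linarith), abs_of_nonpos (by linarith),
    abs_of_nonneg (by linarith)]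
  constructor <;> ring

lemma continuousOn (h : IsUnitSpeedOn γ s) : ContinuousOn γ s :=
  (LipschitzOnWith.mk_one fun a ha b hb =>
    (h a ha b hb).trans_le (Real.dist_eq a b).ge).continuousOn

lemma exists_dist_eq (h : IsUnitSpeedOn γ (Ici 0)) (x : X) {T : ℝ} (hT : dist x (γ 0) ≤ T) :
    ∃ n ∈ Ici (0 : ℝ), dist x (γ n) = T := by
  have hcont : ContinuousOn (fun n => dist x (γ n)) (Ici 0) :=
    (continuous_const.dist continuous_id).comp_continuousOn h.continuousOn
  have htop : Tendsto (fun n => dist x (γ n)) atTop atTop := by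
    refine tendsto_atTop_mono' atTop ?_ (tendsto_atTop_add_const_right _ (-dist x (γ 0)) tendsto_id)
    filter_upwards [eventually_ge_atTop 0] with n hn
    simp only [id]
    have := dist_triangle (γ 0) x (γ n)
    rw [h.dist_zero_apply self_mem_Ici hn hn, dist_comm] at this
    linarith
  exact intermediate_value_Ici hcont htop hT

end IsUnitSpeedOn

lemma dist_apply_dist_le_two_mul_of_asymptotic {X : Type*} [MetricSpace X] {α β : ℝ → X}
    (hα : IsUnitSpeedOn α (Ici 0)) (hβ : IsUnitSpeedOn β (Ici 0)) {C : ℝ}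
    (hC : ∀ t ∈ Ici (0 : ℝ), dist (α t) (β t) ≤ C) {n : ℝ} (hn : n ∈ Ici 0) :
    dist (α n) (β (dist (β 0) (α n))) ≤ 2 * C := by
  have hgap : |n - dist (β 0) (α n)| ≤ C := by
    have h := abs_dist_sub_le (α 0) (β 0) (α n)
    rw [hα.dist_zero_apply self_mem_Ici hn hn] at h
    exact h.trans (hC 0 self_mem_Ici)
  calc dist (α n) (β (dist (β 0) (α n)))
      ≤ dist (α n) (β n) + dist (β n) (β (dist (β 0) (α n))) := dist_triangle _ _ _
    _ ≤ C + C := by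
        rw [hβ n hn _ (mem_Ici.2 dist_nonneg)]
        exact add_le_add (hC n hn) hgap
    _ = 2 * C := by ring

lemma IsAffineMap.mul_dist_apply_eq {X Y : Type*} [MetricSpace X] [MetricSpace Y] {f : X → Y}
    (hf : IsAffineMap f) {γ : ℝ → X} {L s : ℝ} (hL : 0 ≤ L) (hγ : IsUnitSpeedOn γ (Icc 0 L))
    (hs : s ∈ Icc 0 L) :
    L * dist (f (γ 0)) (f (γ s)) = s * dist (f (γ 0)) (f (γ L)) := by
  obtain ⟨ρ, -, hρ⟩ := hf γ L hL hγ
  rw [hρ 0 (left_mem_Icc.2 hL) s hs, hρ 0 (left_mem_Icc.2 hL) L (right_mem_Icc.2 hL), zero_sub,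
    zero_sub, abs_neg, abs_neg, abs_of_nonneg hs.1, abs_of_nonneg hL]
  ring

namespace CAT0Space

variable {X : Type*} [MetricSpace X]

lemma dist_midpoints_le (hX : CAT0Space X) {o y₁ y₂ m₁ m₂ : X}
    (h₁ : dist o m₁ = dist o y₁ / 2) (h₁' : dist y₁ m₁ = dist o y₁ / 2)
    (h₂ : dist o m₂ = dist o y₂ / 2) (h₂' : dist y₂ m₂ = dist o y₂ / 2) :
    dist m₁ m₂ ≤ dist y₁ y₂ / 2 := by
  have A := hX.2 o y₂ m₂ m₁ h₂ h₂'
  have B := hX.2 o y₁ m₁ y₂ h₁ h₁'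
  rw [dist_comm m₁ o, h₁, dist_comm m₁ y₂] at A
  rw [dist_comm y₂ o, dist_comm y₂ y₁] at B
  have hsq : dist m₁ m₂ ^ 2 ≤ (dist y₁ y₂ / 2) ^ 2 := by linarith
  exact (pow_le_pow_iff_left₀ dist_nonneg (by positivity) two_ne_zero).1 hsq

lemma dist_apply_half_le (hX : CAT0Space X) {γ₁ γ₂ : ℝ → X} {L : ℝ} (hL : 0 ≤ L)
    (h₁ : IsUnitSpeedOn γ₁ (Icc 0 L)) (h₂ : IsUnitSpeedOn γ₂ (Icc 0 L)) (h₀ : γ₁ 0 = γ₂ 0) :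
    dist (γ₁ (L / 2)) (γ₂ (L / 2)) ≤ dist (γ₁ L) (γ₂ L) / 2 := by
  obtain ⟨h₁m, h₁m'⟩ := h₁.dist_apply_half hL
  obtain ⟨h₂m, h₂m'⟩ := h₂.dist_apply_half hL
  rw [← h₀] at h₂m h₂m'
  exact hX.dist_midpoints_le h₁m h₁m' h₂m h₂m'

lemma dist_apply_le_div_two_pow (hX : CAT0Space X) {γ₁ γ₂ : ℝ → X} {s : ℝ} (hs : 0 ≤ s)
    (h₀ : γ₁ 0 = γ₂ 0) (k : ℕ) (h₁ : IsUnitSpeedOn γ₁ (Icc 0 (2 ^ k * s)))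
    (h₂ : IsUnitSpeedOn γ₂ (Icc 0 (2 ^ k * s))) :
    dist (γ₁ s) (γ₂ s) ≤ dist (γ₁ (2 ^ k * s)) (γ₂ (2 ^ k * s)) / 2 ^ k := by
  induction k with
  | zero => simp
  | succ k ih =>
    have hsub : Icc 0 (2 ^ k * s) ⊆ Icc 0 (2 ^ (k + 1) * s) :=
      Icc_subset_Icc_right (by gcongr; exacts [one_le_two, k.le_succ])
    have hhalf : 2 ^ (k + 1) * s / 2 = 2 ^ k * s := by rw [pow_succ]; ring
    have := hX.dist_apply_half_le (by positivity) h₁ h₂ h₀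
    rw [hhalf] at this
    calc dist (γ₁ s) (γ₂ s) ≤ dist (γ₁ (2 ^ k * s)) (γ₂ (2 ^ k * s)) / 2 ^ k :=
          ih (h₁.mono hsub) (h₂.mono hsub)
      _ ≤ dist (γ₁ (2 ^ (k + 1) * s)) (γ₂ (2 ^ (k + 1) * s)) / 2 / 2 ^ k := by gcongr
      _ = dist (γ₁ (2 ^ (k + 1) * s)) (γ₂ (2 ^ (k + 1) * s)) / 2 ^ (k + 1) := by
          rw [div_div, ← pow_succ']

lemma exists_geodesic_near_of_asymptotic (hX : CAT0Space X) {α β : ℝ → X}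
    (hα : IsUnitSpeedOn α (Ici 0)) (hβ : IsUnitSpeedOn β (Ici 0)) {C : ℝ}
    (hC : ∀ t ∈ Ici (0 : ℝ), dist (α t) (β t) ≤ C) {t : ℝ} (ht : 0 ≤ t) {k : ℕ}
    (hk : dist (β 0) (α 0) ≤ 2 ^ k * t) :
    ∃ n ∈ Ici (0 : ℝ), ∃ γ : ℝ → X, γ 0 = β 0 ∧ γ (2 ^ k * t) = α n ∧
      IsUnitSpeedOn γ (Icc 0 (2 ^ k * t)) ∧ dist (γ t) (β t) ≤ 2 * C / 2 ^ k := by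
  obtain ⟨n, hn, hT⟩ := hα.exists_dist_eq (β 0) hk
  obtain ⟨γ, hγ0, hγn, hγ⟩ := hX.1 (β 0) (α n)
  rw [hT] at hγn hγ
  refine ⟨n, hn, γ, hγ0, hγn, hγ, ?_⟩
  calc dist (γ t) (β t) ≤ dist (γ (2 ^ k * t)) (β (2 ^ k * t)) / 2 ^ k :=
        hX.dist_apply_le_div_two_pow ht hγ0 k hγ (hβ.mono Icc_subset_Ici_self)
    _ ≤ 2 * C / 2 ^ k := by
        gcongr
        rw [hγn, ← hT]
        exact dist_apply_dist_le_two_mul_of_asymptotic hα hβ hC hn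

end CAT0Space

lemma IsAffineMap.exists_near_of_collapsed_asymptotic {X Y : Type*} [MetricSpace X]
    [MetricSpace Y] (hX : CAT0Space X) {f : X → Y} (hf : IsAffineMap f) {α β : ℝ → X}
    (hα : IsUnitSpeedOn α (Ici 0)) (hβ : IsUnitSpeedOn β (Ici 0)) {C : ℝ}
    (hC : ∀ t ∈ Ici (0 : ℝ), dist (α t) (β t) ≤ C) (h0 : ∀ t ∈ Ici (0 : ℝ), f (α t) = f (α 0))
    {t : ℝ} (ht : 0 < t) {k : ℕ} (hk : dist (β 0) (α 0) ≤ 2 ^ k * t) :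
    ∃ p : X, dist p (β t) ≤ 2 * C / 2 ^ k ∧
      dist (f p) (f (β 0)) = dist (f (β 0)) (f (α 0)) / 2 ^ k := by
  obtain ⟨n, hn, γ, hγ0, hγn, hγ, hnear⟩ :=
    hX.exists_geodesic_near_of_asymptotic hα hβ hC ht.le hk
  have hscale := hf.mul_dist_apply_eq (by positivity) hγ
    ⟨ht.le, le_mul_of_one_le_left ht.le (one_le_pow₀ one_le_two)⟩
  rw [hγ0, hγn, h0 n hn] at hscale
  refine ⟨γ t, hnear, ?_⟩
  rw [dist_comm, eq_div_iff (by positivity)]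
  exact mul_right_cancel₀ ht.ne' (by linarith)

theorem collapsed_ray_asymptotic_general {X Y : Type*} [MetricSpace X] [MetricSpace Y]
    (hX : CAT0Space X)
    (f : X → Y) (hfc : Continuous f) (hfa : IsAffineMap f)
    (α β : ℝ → X)
    (hα : IsUnitSpeedOn α (Set.Ici 0)) (hβ : IsUnitSpeedOn β (Set.Ici 0))
    (hasymp : ∃ C : ℝ, ∀ t ∈ Set.Ici (0:ℝ), dist (α t) (β t) ≤ C)
    (h0 : ∀ t ∈ Set.Ici (0:ℝ), f (α t) = f (α 0)) :
    ∀ t ∈ Set.Ici (0:ℝ), f (β t) = f (β 0) := by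
  intro t ht
  obtain rfl | ht := (mem_Ici.1 ht).eq_or_lt
  · rfl
  obtain ⟨C, hC⟩ := hasymp
  obtain ⟨K, hK⟩ := pow_unbounded_of_one_lt (dist (β 0) (α 0) / t) one_lt_two
  have hk (k : ℕ) : dist (β 0) (α 0) ≤ 2 ^ (k + K) * t := by
    rw [div_lt_iff₀ ht] at hK
    exact hK.le.trans (by gcongr; exacts [one_le_two, K.le_add_left k])
  choose p hp hfp using fun k =>
    hfa.exists_near_of_collapsed_asymptotic hX hα hβ hC h0 ht (hk k)
  have hpow : Tendsto (fun k : ℕ => (2 : ℝ) ^ (k + K)) atTop atTop :=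
    (tendsto_pow_atTop_atTop_of_one_lt one_lt_two).comp (tendsto_add_atTop_nat K)
  have hp_lim : Tendsto p atTop (𝓝 (β t)) :=
    tendsto_iff_dist_tendsto_zero.2 <|
      squeeze_zero (fun _ => dist_nonneg) hp (tendsto_const_nhds.div_atTop hpow)
  have hfp_lim : Tendsto (f ∘ p) atTop (𝓝 (f (β 0))) := by
    refine tendsto_iff_dist_tendsto_zero.2 ?_
    simp only [Function.comp_apply, hfp]
    exact tendsto_const_nhds.div_atTop hpow
  exact tendsto_nhds_unique ((hfc.tendsto _).comp hp_lim) hfp_lim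

/-- Let `f : X → Y` be a continuous affine map between proper CAT(0)
spaces and let `α, β` be asymptotic unit-speed geodesic rays in `X`.  If `f` collapses
`α` to a point (`ρ(α) = 0`), then `f` collapses `β` to a point (`ρ(β) = 0`). -/
theorem collapsed_ray_asymptotic {X Y : Type*} [MetricSpace X] [MetricSpace Y]
    [ProperSpace X] [ProperSpace Y] (hX : CAT0Space X) (hY : CAT0Space Y)
    (f : X → Y) (hfc : Continuous f) (hfa : IsAffineMap f)
    (α β : ℝ → X)
    (hα : IsUnitSpeedOn α (Set.Ici 0)) (hβ : IsUnitSpeedOn β (Set.Ici 0))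
    (hasymp : ∃ C : ℝ, ∀ t ∈ Set.Ici (0:ℝ), dist (α t) (β t) ≤ C)
    (h0 : ∀ t ∈ Set.Ici (0:ℝ), f (α t) = f (α 0)) :
    ∀ t ∈ Set.Ici (0:ℝ), f (β t) = f (β 0) :=
  collapsed_ray_asymptotic_general hX f hfc hfa α β hα hβ hasymp h0
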